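/- Suppose the finite simple graphs G and H both have girth at least g and |E(G)| = |E(H)|. Then the chromatic coefficients satisfy e_i(G) = e_i(H) for all i = 0, 1, ..., g-2. -/

import Mathlib

/-!
Summing `∏_{uv ∈ E} (1 - [f u = f v])` over all `f : V → Fin q` and expanding the product
gives Whitney's expansion `P(q) = ∑_{S ⊆ E} (-1)^|S| q^c(S)`, where `c(S)` counts the components
of the spanning subgraph `(V, S)`. If `(V, S)` is a forest then `c(S) = n - |S|`; if it contains
a cycle, of length `ℓ ≥ max 3 g`, then `|S| ≥ ℓ` and the `ℓ` vertices of the cycle lie in one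
component, so `c(S) ≤ n + 1 - ℓ`. Hence for `i ≤ g - 2` the sets `S` contributing to the
coefficient of `q^(n-i)` are exactly the `i`-element ones, and `e_i = (|E| choose i)` depends on
`|E|` alone.
-/

open Polynomial

noncomputable def properColorings {V : Type*} (G : SimpleGraph V) (q : ℕ) : ℕ :=
  Nat.card {f : V → Fin q // ∀ ⦃x y⦄, G.Adj x y → f x ≠ f y}

def chromaticCoeff (n : ℕ) (P : ℤ[X]) (k : ℕ) : ℤ :=
  if k ≤ n then (-1) ^ k * P.coeff (n - k) else 0

open Finset

namespace SimpleGraph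

variable {V : Type*} {Γ G : SimpleGraph V} {x y : V}

lemma Reachable.of_sup_edge {u v : V} (h : (Γ ⊔ edge x y).Reachable u v) :
    Γ.Reachable u v ∨ Γ.Reachable u x ∧ Γ.Reachable y v ∨ Γ.Reachable u y ∧ Γ.Reachable x v := by
  obtain ⟨p⟩ := h
  induction p with
  | nil => exact .inl .rfl
  | cons hadj _ ih =>
    rw [sup_adj, edge_adj] at hadj
    rcases hadj with hadj | ⟨⟨rfl, rfl⟩ | ⟨rfl, rfl⟩, -⟩ <;>
      grind [Adj.reachable, Reachable.trans, Reachable.symm, Reachable.rfl]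

lemma deleteEdges_sup_edge (h : Γ.Adj x y) : Γ.deleteEdges {s(x, y)} ⊔ edge x y = Γ := by
  ext a b
  simp only [sup_adj, deleteEdges_adj, Set.mem_singleton_iff, edge_adj, Sym2.eq_iff]
  grind [Adj.symm, Adj.ne]

lemma edgeSet_fromEdgeSet_of_subset {s : Set (Sym2 V)} (h : s ⊆ G.edgeSet) :
    (fromEdgeSet s).edgeSet = s := by
  rw [edgeSet_fromEdgeSet, sdiff_eq_left]
  exact Set.subset_compl_iff_disjoint_right.mp (h.trans G.edgeSet_subset_compl_diagSet)

lemma card_connectedComponent_bot :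
    Nat.card (⊥ : SimpleGraph V).ConnectedComponent = Nat.card V :=
  Nat.card_eq_of_bijective _ ⟨fun _ _ huv => reachable_bot.mp (ConnectedComponent.eq.mp huv),
    Quot.mk_surjective⟩ |>.symm

section Components

variable [Finite V]

lemma card_connectedComponent_sup_edge (h : ¬Γ.Reachable x y) :
    Nat.card (Γ ⊔ edge x y).ConnectedComponent + 1 = Nat.card Γ.ConnectedComponent := by
  classical
  have := Fintype.ofFinite V
  set φ := ConnectedComponent.map (Hom.ofLE (le_sup_left : Γ ≤ Γ ⊔ edge x y))
  set cy := Γ.connectedComponentMk y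
  -- `φ` identifies the components of `x` and `y` and nothing else.
  have hinj : Set.InjOn φ (univ.erase cy : Finset _) := by
    intro C hC D hD hCD
    induction C using ConnectedComponent.ind with | h u => ?_
    induction D using ConnectedComponent.ind with | h v => ?_
    simp only [coe_erase, coe_univ, Set.mem_sdiff, Set.mem_univ, Set.mem_singleton_iff, true_and,
      cy, ConnectedComponent.eq] at hC hD
    simp only [φ, ConnectedComponent.map_mk, ConnectedComponent.eq, Hom.coe_ofLE, id] at hCD
    rcases hCD.of_sup_edge with huv | ⟨-, hyv⟩ | ⟨huy, -⟩
    · exact ConnectedComponent.sound huv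
    · exact (hD hyv.symm).elim
    · exact (hC huy).elim
  have himage : (univ.erase cy).image φ = univ := by
    refine eq_univ_of_forall fun C => ?_
    obtain ⟨v, rfl⟩ := ConnectedComponent.surjective_map_ofLE le_sup_left C
    induction v using ConnectedComponent.ind with | h v => ?_
    by_cases hv : Γ.connectedComponentMk v = cy
    · have hxy : (Γ ⊔ edge x y).Adj x y := by
        rw [sup_adj, edge_adj]
        exact .inr ⟨.inl ⟨rfl, rfl⟩, by rintro rfl; exact h .rfl⟩
      refine mem_image.mpr ⟨Γ.connectedComponentMk x, ?_, ?_⟩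
      · simpa [cy, ConnectedComponent.eq] using h
      · rw [hv]
        exact ConnectedComponent.sound hxy.reachable
    · exact mem_image_of_mem φ (mem_erase.mpr ⟨hv, mem_univ _⟩)
  rw [Nat.card_eq_fintype_card, Nat.card_eq_fintype_card, ← card_univ, ← himage,
    card_image_of_injOn hinj, card_erase_add_one (mem_univ _), card_univ]

lemma IsAcyclic.card_connectedComponent_add_card_edgeSet (h : Γ.IsAcyclic) :
    Nat.card Γ.ConnectedComponent + Nat.card Γ.edgeSet = Nat.card V := by
  rw [Nat.card_coe_set_eq]
  induction hm : Γ.edgeSet.ncard generalizing Γ with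
  | zero =>
    obtain rfl : Γ = ⊥ := edgeSet_eq_empty.mp ((Set.ncard_eq_zero (Set.toFinite _)).mp hm)
    simpa using card_connectedComponent_bot
  | succ m ih =>
    obtain ⟨e, he⟩ : Γ.edgeSet.Nonempty := Set.nonempty_of_ncard_ne_zero (by omega)
    induction e using Sym2.ind with | h x y => ?_
    have hbridge : ¬(Γ.deleteEdges {s(x, y)}).Reachable x y :=
      isBridge_iff.mp (isAcyclic_iff_forall_isBridge.mp h he)
    have hcard : (Γ.deleteEdges {s(x, y)}).edgeSet.ncard = m := by
      rw [edgeSet_deleteEdges, Set.ncard_sdiff_singleton_of_mem he, hm, Nat.add_sub_cancel]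
    have hsup := card_connectedComponent_sup_edge hbridge
    rw [deleteEdges_sup_edge he] at hsup
    have := ih (h.anti (deleteEdges_le _)) hcard
    omega

lemma card_connectedComponent_add_card_le {s : Finset V} (C : Γ.ConnectedComponent)
    (hs : ∀ v ∈ s, Γ.connectedComponentMk v = C) :
    Nat.card Γ.ConnectedComponent + #s ≤ Nat.card V + 1 := by
  classical
  have := Fintype.ofFinite V
  induction C using ConnectedComponent.ind with | h v₀ => ?_
  have himage : (insert v₀ sᶜ).image Γ.connectedComponentMk = univ := by
    refine eq_univ_of_forall fun D => D.ind fun v => ?_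
    by_cases hv : v ∈ s
    · exact mem_image.mpr ⟨v₀, mem_insert_self _ _, (hs v hv).symm⟩
    · exact mem_image_of_mem _ (mem_insert_of_mem (mem_compl.mpr hv))
  have hcard : Nat.card Γ.ConnectedComponent ≤ #sᶜ + 1 := by
    rw [Nat.card_eq_fintype_card, ← card_univ, ← himage]
    exact card_image_le.trans (card_insert_le _ _)
  rw [card_compl, ← Nat.card_eq_fintype_card] at hcard
  have := Nat.card_eq_fintype_card (α := V) ▸ s.card_le_univ
  omega

lemma Walk.IsCycle.card_connectedComponent_add_length_le {u : V} {p : Γ.Walk u u}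
    (hp : p.IsCycle) : Nat.card Γ.ConnectedComponent + p.length ≤ Nat.card V + 1 := by
  classical
  have hlen : #p.support.tail.toFinset = p.length := by
    rw [List.toFinset_card_of_nodup hp.support_nodup, List.length_tail, Walk.length_support,
      Nat.add_sub_cancel]
  rw [← hlen]
  refine card_connectedComponent_add_card_le (Γ.connectedComponentMk u) fun v hv => ?_
  have hv : v ∈ p.support := List.mem_of_mem_tail (List.mem_toFinset.mp hv)
  exact (ConnectedComponent.sound ⟨p.takeUntil v hv⟩).symm

lemma Walk.IsCycle.length_le_card_edgeSet {u : V} {p : Γ.Walk u u} (hp : p.IsCycle) :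
    p.length ≤ Nat.card Γ.edgeSet := by
  have := Fintype.ofFinite Γ.edgeSet
  rw [Nat.card_eq_fintype_card, ← edgeFinset_card]
  exact hp.isTrail.length_le_card_edgeFinset

lemma isAcyclic_of_card_lt_egirth (h : Nat.card V < Γ.egirth) : Γ.IsAcyclic := by
  intro u p hp
  have := Fintype.ofFinite V
  have hlen : p.length ≤ Nat.card V := by
    simpa [Nat.card_eq_fintype_card] using hp.support_nodup.length_le_card
  exact (h.trans_le (egirth_le_length hp)).not_ge (by exact_mod_cast hlen)

lemma card_connectedComponent_eq_sub_iff {g i : ℕ} (hg : g ≤ Γ.egirth) (hi : i ≤ g - 2)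
    (hin : i ≤ Nat.card V) :
    Nat.card Γ.ConnectedComponent = Nat.card V - i ↔ Nat.card Γ.edgeSet = i := by
  by_cases hacyc : Γ.IsAcyclic
  · have := hacyc.card_connectedComponent_add_card_edgeSet
    omega
  · obtain ⟨u, p, hp⟩ : ∃ u, ∃ p : Γ.Walk u u, p.IsCycle := by simpa [IsAcyclic] using hacyc
    have h3 := hp.three_le_length
    have hgp : g ≤ p.length := by exact_mod_cast hg.trans (egirth_le_length hp)
    have hedges := hp.length_le_card_edgeSet
    have hcomp := hp.card_connectedComponent_add_length_le
    omega

end Components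

section Colorings

lemma card_fun_constant_on_adj [Finite V] (Γ : SimpleGraph V) (α : Type*) :
    Nat.card {f : V → α // ∀ ⦃a b⦄, Γ.Adj a b → f a = f b} =
      Nat.card α ^ Nat.card Γ.ConnectedComponent := by
  have : Finite Γ.ConnectedComponent := Finite.of_surjective _ Quot.mk_surjective
  have hwalk (f : {f : V → α // ∀ ⦃a b⦄, Γ.Adj a b → f a = f b}) {v w : V} (p : Γ.Walk v w) :
      f.1 v = f.1 w := by
    induction p with
    | nil => rfl
    | cons h _ ih => exact (f.2 h).trans ih
  rw [← Nat.card_fun]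
  exact Nat.card_congr
    { toFun f := ConnectedComponent.lift f.1 fun _ _ p _ => hwalk f p
      invFun c := ⟨c ∘ Γ.connectedComponentMk,
        fun _ _ h => congrArg c (ConnectedComponent.sound h.reachable)⟩
      left_inv _ := rfl
      right_inv c := funext fun C => C.ind fun _ => rfl }

variable [Fintype V] [DecidableEq V]

lemma properColorings_eq_sum_powerset (G : SimpleGraph V) [Fintype G.edgeSet] (q : ℕ) :
    (properColorings G q : ℤ) = ∑ S ∈ G.edgeFinset.powerset,
      (-1 : ℤ) ^ #S * (q : ℤ) ^ Nat.card (fromEdgeSet (S : Set (Sym2 V))).ConnectedComponent := by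
  let mono (e : Sym2 V) : Finset (V → Fin q) := {f | (e.map f).IsDiag}
  have hmono (S : Finset (Sym2 V)) :
      #(S.inf mono) = q ^ Nat.card (fromEdgeSet (S : Set (Sym2 V))).ConnectedComponent := by
    rw [← Nat.card_eq_finsetCard]
    refine (Nat.card_congr (Equiv.subtypeEquivRight fun f => ?_)).trans
      ((card_fun_constant_on_adj _ (Fin q)).trans (by rw [Nat.card_fin]))
    simp only [mem_inf, mono, mem_filter, mem_univ, true_and, fromEdgeSet_adj, Sym2.forall,
      Sym2.map_mk, Sym2.mk_isDiag_iff, Finset.mem_coe]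
    grind
  have hproper : properColorings G q = #(G.edgeFinset.inf fun e => (mono e)ᶜ) := by
    rw [properColorings, ← Nat.card_eq_finsetCard]
    refine Nat.card_congr (Equiv.subtypeEquivRight fun f => ?_)
    simp only [mem_inf, mono, mem_compl, mem_filter, mem_univ, true_and, Sym2.forall,
      Sym2.map_mk, Sym2.mk_isDiag_iff, mem_edgeFinset, mem_edgeSet]
  rw [hproper, inclusion_exclusion_card_inf_compl]
  simp only [hmono, Nat.cast_pow]

lemma eq_sum_powerset_of_eval_eq_properColorings [Fintype G.edgeSet] {P : ℤ[X]}
    (hP : ∀ q : ℕ, P.eval (q : ℤ) = properColorings G q) :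
    P = ∑ S ∈ G.edgeFinset.powerset,
      C ((-1 : ℤ) ^ #S) * X ^ Nat.card (fromEdgeSet (S : Set (Sym2 V))).ConnectedComponent := by
  refine eq_of_infinite_eval_eq _ _ ((Set.infinite_range_of_injective Nat.cast_injective).mono ?_)
  rintro _ ⟨q, rfl⟩
  simp [hP, properColorings_eq_sum_powerset, eval_finsetSum]

end Colorings

lemma coeff_card_sub_of_eval_eq_properColorings [Fintype V] {g i : ℕ} (hg : g ≤ G.egirth)
    (hi : i ≤ g - 2) (hin : i ≤ Fintype.card V) {P : ℤ[X]}
    (hP : ∀ q : ℕ, P.eval (q : ℤ) = properColorings G q) :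
    P.coeff (Fintype.card V - i) = (-1) ^ i * (Nat.card G.edgeSet).choose i := by
  classical
  have hterm : ∀ S ∈ G.edgeFinset.powerset,
      (C ((-1 : ℤ) ^ #S) * X ^ Nat.card (fromEdgeSet (S : Set (Sym2 V))).ConnectedComponent).coeff
        (Fintype.card V - i) = if #S = i then (-1) ^ i else 0 := by
    intro S hS
    have hSG : (S : Set (Sym2 V)) ⊆ G.edgeSet := by
      simpa [← coe_subset] using mem_powerset.mp hS
    have hle : fromEdgeSet (S : Set (Sym2 V)) ≤ G :=
      (fromEdgeSet_le G).mpr (Set.sdiff_subset.trans hSG)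
    have key := card_connectedComponent_eq_sub_iff (hg.trans (egirth_anti hle)) hi
      (by rwa [Nat.card_eq_fintype_card])
    rw [edgeSet_fromEdgeSet_of_subset hSG, Nat.card_coe_set_eq, Set.ncard_coe_finset,
      Nat.card_eq_fintype_card (α := V)] at key
    simp only [coeff_C_mul_X_pow, eq_comm (a := Fintype.card V - i), key]
    split_ifs with h <;> simp [h]
  rw [eq_sum_powerset_of_eval_eq_properColorings hP, finsetSum_coeff, sum_congr rfl hterm,
    ← sum_filter, ← powersetCard_eq_filter, sum_const, card_powersetCard, nsmul_eq_mul,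
    edgeFinset_card, Nat.card_eq_fintype_card, mul_comm]

lemma chromaticCoeff_eq_choose [Fintype V] {g i : ℕ} (hg : g ≤ G.egirth) (hi : i ≤ g - 2) {P : ℤ[X]}
    (hP : ∀ q : ℕ, P.eval (q : ℤ) = properColorings G q) :
    chromaticCoeff (Fintype.card V) P i = (Nat.card G.edgeSet).choose i := by
  unfold chromaticCoeff
  split_ifs with hin
  · rw [coeff_card_sub_of_eval_eq_properColorings hg hi hin hP, ← mul_assoc, ← pow_add,
      Even.neg_one_pow ⟨i, rfl⟩, one_mul]
  · have hV : Nat.card V < g := by rw [Nat.card_eq_fintype_card]; omega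
    have hforest := (isAcyclic_of_card_lt_egirth ((Nat.cast_lt.mpr hV).trans_le hg))
      |>.card_connectedComponent_add_card_edgeSet
    rw [Nat.card_eq_fintype_card (α := V)] at hforest
    rw [Nat.choose_eq_zero_of_lt (by omega), Nat.cast_zero]

end SimpleGraph

/-- If two finite simple graphs both have girth at least `g` and the same number of edges,
then their chromatic coefficients `e_i` agree for `i = 0, 1, …, g-2`. -/
theorem chromatic_coefficients_eq_of_girth {V W : Type*} [Fintype V] [Fintype W]
    (G : SimpleGraph V) (H : SimpleGraph W) (g : ℕ)
    (hG : (g : ℕ∞) ≤ G.egirth) (hH : (g : ℕ∞) ≤ H.egirth)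
    (hE : Nat.card G.edgeSet = Nat.card H.edgeSet)
    (P Q : Polynomial ℤ)
    (hP : ∀ q : ℕ, P.eval (q : ℤ) = properColorings G q)
    (hQ : ∀ q : ℕ, Q.eval (q : ℤ) = properColorings H q)
    (eG eH : ℕ → ℤ)
    (heG : ∀ k, eG k = if k ≤ Fintype.card V then
      (-1 : ℤ) ^ k * P.coeff (Fintype.card V - k) else 0)
    (heH : ∀ k, eH k = if k ≤ Fintype.card W then
      (-1 : ℤ) ^ k * Q.coeff (Fintype.card W - k) else 0)
    (i : ℕ) (hi : i ≤ g - 2) :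
    eG i = eH i :=
  calc eG i = chromaticCoeff (Fintype.card V) P i := heG i
    _ = (Nat.card G.edgeSet).choose i := SimpleGraph.chromaticCoeff_eq_choose hG hi hP
    _ = (Nat.card H.edgeSet).choose i := by rw [hE]
    _ = chromaticCoeff (Fintype.card W) Q i := (SimpleGraph.chromaticCoeff_eq_choose hH hi hQ).symm
    _ = eH i := (heH i).symm
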